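/- Let P : {0,1}^N → ℝ be a multilinear polynomial of degree at most d, i.e., P(y) = Σ_{S ⊆ [N], |S| ≤ d} β_S · Π_{i∈S} y_i with real coefficients β_S. Then every coefficient satisfies |β_S| ≤ (1 + (1 + 2^d)^{d-1}) · ‖P‖_∞, where ‖P‖_∞ = max_{y ∈ {0,1}^N} |P(y)|. -/
import Mathlib

open Finset

lemma prod_ind {N : ℕ} (T U : Finset (Fin N)) :
    (∏ i ∈ U, (if i ∈ T then (1:ℝ) else 0)) = if U ⊆ T then 1 else 0 := by
  by_cases h : U ⊆ T
  · rw [if_pos h]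
    exact Finset.prod_eq_one fun i hi => if_pos (h hi)
  · rw [if_neg h]
    obtain ⟨i, hiU, hiT⟩ := Finset.not_subset.1 h
    exact Finset.prod_eq_zero hiU (if_neg hiT)

lemma my_inner_sum {N : ℕ} (S U : Finset (Fin N)) :
    (∑ T ∈ S.powerset.filter (fun T => U ⊆ T), (-1:ℝ)^(S.card - T.card))
      = if U = S then 1 else 0 := by
  by_cases hUS : U ⊆ S
  · have key : (∑ T ∈ S.powerset.filter (fun T => U ⊆ T), (-1:ℝ)^(S.card - T.card))
        = ∑ V ∈ (S \ U).powerset, (-1:ℝ)^(V.card) := by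
      refine Finset.sum_nbij' (fun T => S \ T) (fun V => S \ V) ?_ ?_ ?_ ?_ ?_
      · intro T hT
        simp only [mem_filter, mem_powerset] at hT ⊢
        exact sdiff_subset_sdiff le_rfl hT.2
      · intro V hV
        simp only [mem_powerset] at hV
        simp only [mem_filter, mem_powerset]
        refine ⟨sdiff_subset, fun i hi => ?_⟩
        have h1 : i ∈ S := hUS hi
        have h2 : i ∉ V := fun h => (Finset.mem_sdiff.1 (hV h)).2 hi
        exact Finset.mem_sdiff.2 ⟨h1, h2⟩
      · intro T hT
        simp only [mem_filter, mem_powerset] at hT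
        exact Finset.sdiff_sdiff_eq_self hT.1
      · intro V hV
        simp only [mem_powerset] at hV
        exact Finset.sdiff_sdiff_eq_self (hV.trans sdiff_subset)
      · intro T hT
        simp only [mem_filter, mem_powerset] at hT
        rw [Finset.card_sdiff_of_subset hT.1]
    rw [key]
    have hZ := Finset.sum_powerset_neg_one_pow_card (x := S \ U)
    have := congrArg (fun z : ℤ => (z : ℝ)) hZ
    push_cast at this
    rw [this]
    by_cases h : U = S
    · simp [h]
    · have : S \ U ≠ ∅ := by
        rw [Ne, Finset.sdiff_eq_empty_iff_subset]
        exact fun hSU => h (subset_antisymm hUS hSU)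
      rw [if_neg this, if_neg h]
  · have h1 : S.powerset.filter (fun T => U ⊆ T) = ∅ := by
      ext T
      simp only [mem_filter, mem_powerset, Finset.notMem_empty, iff_false, not_and]
      exact fun hT hUT => hUS (hUT.trans hT)
    have h2 : U ≠ S := fun h => hUS (h ▸ le_rfl)
    rw [h1, if_neg h2, Finset.sum_empty]

theorem coeff_bound (N d : ℕ) (β : Finset (Fin N) → ℝ)
    (P : (Fin N → Bool) → ℝ)
    (hP : ∀ y : Fin N → Bool,
      P y = ∑ S ∈ Finset.univ.powerset.filter (fun S : Finset (Fin N) => S.card ≤ d),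
        β S * ∏ i ∈ S, (if y i then (1:ℝ) else 0))
    (S : Finset (Fin N)) (hS : S.card ≤ d) :
    |β S| ≤ (1 + (1 + 2^d : ℝ)^(d-1)) * (⨆ y : Fin N → Bool, |P y|) := by
  classical
  set F := Finset.univ.powerset.filter (fun S : Finset (Fin N) => S.card ≤ d) with hF
  set M := ⨆ y : Fin N → Bool, |P y| with hM
  have hbdd : BddAbove (Set.range fun y : Fin N → Bool => |P y|) :=
    Set.Finite.bddAbove (Set.finite_range _)
  have hPM : ∀ y, |P y| ≤ M := fun y => le_ciSup hbdd y
  have hM0 : 0 ≤ M := le_trans (abs_nonneg _) (hPM (fun _ => false))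
  -- inversion formula
  have hinv : β S = ∑ T ∈ S.powerset,
      (-1:ℝ)^(S.card - T.card) * P (fun i => decide (i ∈ T)) := by
    have step : ∀ T : Finset (Fin N),
        P (fun i => decide (i ∈ T)) = ∑ U ∈ F, β U * (if U ⊆ T then (1:ℝ) else 0) := by
      intro T
      rw [hP]
      refine Finset.sum_congr rfl fun U _ => ?_
      rw [← prod_ind T U]
      congr 1
      refine Finset.prod_congr rfl fun i _ => ?_
      simp
    calc β S
        = ∑ U ∈ F, β U * (if U = S then (1:ℝ) else 0) := by
          simp only [mul_ite, mul_one, mul_zero]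
          rw [Finset.sum_ite_eq' F S (fun U => β U), if_pos]
          simp only [hF, mem_filter, mem_powerset]
          exact ⟨Finset.subset_univ S, hS⟩
      _ = ∑ U ∈ F, β U * ∑ T ∈ S.powerset.filter (fun T => U ⊆ T),
            (-1:ℝ)^(S.card - T.card) := by
          refine Finset.sum_congr rfl fun U _ => ?_
          rw [my_inner_sum]
      _ = ∑ U ∈ F, ∑ T ∈ S.powerset,
            (-1:ℝ)^(S.card - T.card) * (β U * (if U ⊆ T then 1 else 0)) := by
          refine Finset.sum_congr rfl fun U _ => ?_
          rw [Finset.mul_sum, Finset.sum_filter]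
          refine Finset.sum_congr rfl fun T _ => ?_
          by_cases h : U ⊆ T <;> simp [h, mul_comm]
      _ = ∑ T ∈ S.powerset, ∑ U ∈ F,
            (-1:ℝ)^(S.card - T.card) * (β U * (if U ⊆ T then 1 else 0)) :=
          Finset.sum_comm
      _ = ∑ T ∈ S.powerset,
            (-1:ℝ)^(S.card - T.card) * P (fun i => decide (i ∈ T)) := by
          refine Finset.sum_congr rfl fun T _ => ?_
          rw [step T, Finset.mul_sum]
  -- bound
  have hb : |β S| ≤ (2:ℝ)^d * M := by
    rw [hinv]
    calc |∑ T ∈ S.powerset, (-1:ℝ)^(S.card - T.card) * P (fun i => decide (i ∈ T))|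
        ≤ ∑ T ∈ S.powerset, |(-1:ℝ)^(S.card - T.card) * P (fun i => decide (i ∈ T))| :=
          Finset.abs_sum_le_sum_abs _ _
      _ ≤ ∑ _T ∈ S.powerset, M := by
          refine Finset.sum_le_sum fun T _ => ?_
          rw [abs_mul, abs_pow, abs_neg, abs_one, one_pow, one_mul]
          exact hPM _
      _ = (2:ℝ)^(S.card) * M := by
          rw [Finset.sum_const, Finset.card_powerset, nsmul_eq_mul]
          push_cast
          ring
      _ ≤ (2:ℝ)^d * M := by
          apply mul_le_mul_of_nonneg_right _ hM0
          exact pow_le_pow_right₀ one_le_two hS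
  refine hb.trans (mul_le_mul_of_nonneg_right ?_ hM0)
  -- 2^d ≤ 1 + (1+2^d)^(d-1)
  match d with
  | 0 => norm_num
  | 1 => norm_num
  | (n+2) =>
    have h1 : (2:ℝ)^(n+2) ≤ 1 + 2^(n+2) := by linarith
    have h2 : (1 + (2:ℝ)^(n+2)) ≤ (1 + 2^(n+2))^(n+2-1) := by
      apply le_self_pow₀
      · have : (0:ℝ) < 2^(n+2) := by positivity
        linarith
      · simp
    have h3 : (0:ℝ) ≤ (1 + 2^(n+2))^(n+2-1) := by positivity
    nlinarith
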